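/- arXiv:1405.5446 — 2 statements merged into one kernel-verified Lean document; each statement's English description precedes it below -/
import Mathlib

section
/- Let κ > 0, α > 0 and δ < 0. For every ε > 0 and every x₁ ∈ [0, ℓ_ε): μ₀(x₁) ≤ μ_ε(x₁) < 0 (equivalently |μ_ε(x₁)| ≤ |μ₀(x₁)|), and moreover the difference function x₁ ↦ μ_ε(x₁) − μ₀(x₁) is nonnegative and nondecreasing on [0, ℓ_ε). -/
/-!
Since `μ_ε` inverts `ρ_ε`, everything is a comparison of integrals of `1 / H_ε` and `1 / H₀`.
From `H₀ ≤ H_ε` we get `ρ_ε ≤ ρ₀`, hence `μ₀ ≤ μ_ε`.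

The monotonicity of `μ_ε − μ₀` rests on the slope comparison `H₀(μ₀ x) ≤ H_ε(μ_ε x)`.
Writing `ρ₀ = L ∘ H₀ − L(H₀ δ)` with `L(h) = (ακ)⁻¹ (h/κ)^(−α/(1+α))`, the function `L ∘ H_ε`
has derivative at most `1 / H_ε` (because `κ|t|^(1+α) ≤ H_ε(t)`), so
`L(H_ε ξ) − L(H₀ δ) ≤ ρ_ε(ξ)`; applied at `ξ = μ_ε x` this says that `L(H_ε(μ_ε x)) ≤ L(H₀(μ₀ x))`,
and `L` is decreasing. Convexity of `H₀` then propagates the slope comparison: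
`H₀(t) ≤ H_ε(t + μ_ε x − μ₀ x)` for `t ≥ μ₀ x`. So for `x ≤ y`, the ε-flow shifted by
`μ_ε x − μ₀ x` is no faster than the 0-flow, and covering the time `y − x` moves it at least as
far: `μ_ε y − μ_ε x ≥ μ₀ y − μ₀ x`.
-/

open Set MeasureTheory intervalIntegral

theorem le_of_integral_eq_of_le {f g : ℝ → ℝ} {a b c : ℝ} (hab : a ≤ b)
    (hf : IntervalIntegrable f volume a b) (hg : IntervalIntegrable g volume a c)
    (hfg : ∀ t ∈ Icc a b, f t ≤ g t) (hg_pos : ∀ t ∈ Ioo a c, 0 < g t)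
    (h : ∫ t in a..c, g t = ∫ t in a..b, f t) : c ≤ b := by
  by_contra! hbc
  have hac : a ≤ c := hab.trans hbc.le
  have hg_ab : IntervalIntegrable g volume a b := hg.mono_set <| by
    rw [uIcc_of_le hab, uIcc_of_le hac]; exact Icc_subset_Icc_right hbc.le
  have hg_bc : IntervalIntegrable g volume b c := hg.mono_set <| by
    rw [uIcc_of_le hbc.le, uIcc_of_le hac]; exact Icc_subset_Icc_left hab
  have h_tail : 0 < ∫ t in b..c, g t :=
    intervalIntegral_pos_of_pos_on hg_bc (fun t ht => hg_pos t ⟨hab.trans_lt ht.1, ht.2⟩) hbc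
  have h_head : ∫ t in a..b, f t ≤ ∫ t in a..b, g t := integral_mono_on hab hf hg_ab hfg
  rw [← integral_add_adjacent_intervals hg_ab hg_bc] at h
  linarith

theorem ConvexOn.map_add_sub_map_le {s : Set ℝ} {f : ℝ → ℝ} (hf : ConvexOn ℝ s f) {x y c : ℝ}
    (hx : x ∈ s) (hyc : y + c ∈ s) (hxy : x ≤ y) (hc : 0 ≤ c) :
    f (x + c) - f x ≤ f (y + c) - f y := by
  rcases hxy.eq_or_lt with rfl | hxy
  · rfl
  have hz : 0 < y + c - x := by linarith
  -- `x + c` and `y` are the convex combinations of `x` and `y + c` with swapped weights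
  set θ := c / (y + c - x)
  have hθ₀ : 0 ≤ θ := div_nonneg hc hz.le
  have hθ₁ : 0 ≤ 1 - θ := by rw [one_sub_div hz.ne']; exact div_nonneg (by linarith) hz.le
  have h₁ := hf.2 hx hyc hθ₁ hθ₀ (sub_add_cancel 1 θ)
  have h₂ := hf.2 hx hyc hθ₀ hθ₁ (add_sub_cancel θ 1)
  simp only [smul_eq_mul] at h₁ h₂
  have e₁ : (1 - θ) * x + θ * (y + c) = x + c := by simp only [θ]; field_simp; ring
  have e₂ : θ * x + (1 - θ) * (y + c) = y := by simp only [θ]; field_simp; ring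
  rw [e₁] at h₁
  rw [e₂] at h₂
  linarith

namespace PowerFlux

noncomputable section

def H (κ α ε s : ℝ) : ℝ := κ * |s| ^ (1 + α) + ε

def rho (κ α ε δ ξ : ℝ) : ℝ := ∫ s in δ..ξ, 1 / H κ α ε s

/-- Up to an additive constant, the value of `rho κ α 0 δ` at the point `s < 0` where
`H κ α 0 s = h`. -/
def levelTime (κ α h : ℝ) : ℝ := (α * κ)⁻¹ * (h / κ) ^ (-α / (1 + α))

end

variable {κ α ε δ : ℝ}

theorem H_pos (hκ : 0 < κ) (hε : 0 ≤ ε) {s : ℝ} (hs : s ≠ 0) : 0 < H κ α ε s := by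
  have := Real.rpow_pos_of_pos (abs_pos.2 hs) (1 + α)
  unfold H; positivity

theorem H_pos_of_pos (hκ : 0 ≤ κ) (hε : 0 < ε) (s : ℝ) : 0 < H κ α ε s := by
  unfold H; positivity

theorem continuous_H (hα : 0 ≤ α) : Continuous (H κ α ε) := by
  unfold H
  have := continuous_abs.rpow_const (p := 1 + α) fun _ => Or.inr (by linarith)
  fun_prop

theorem continuous_inv_H (hκ : 0 ≤ κ) (hα : 0 ≤ α) (hε : 0 < ε) :
    Continuous fun s => 1 / H κ α ε s :=
  continuous_const.div (continuous_H hα) fun s => (H_pos_of_pos hκ hε s).ne'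

theorem intervalIntegrable_inv_H (hκ : 0 < κ) (hα : 0 ≤ α) (hε : 0 ≤ ε) {a b : ℝ}
    (ha : a < 0) (hb : b < 0) : IntervalIntegrable (fun s => 1 / H κ α ε s) volume a b := by
  refine ContinuousOn.intervalIntegrable (continuousOn_const.div (continuous_H hα).continuousOn
    fun s hs => (H_pos hκ hε ?_).ne')
  exact (hs.2.trans_lt (max_lt ha hb)).ne

theorem levelTime_strictAntiOn (hκ : 0 < κ) (hα : 0 < α) :
    StrictAntiOn (levelTime κ α) (Ioi 0) := by
  intro a ha b hb hab
  have hq : -α / (1 + α) < 0 := div_neg_of_neg_of_pos (by linarith) (by linarith)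
  exact mul_lt_mul_of_pos_left
    (Real.rpow_lt_rpow_of_neg (div_pos ha hκ) (div_lt_div_of_pos_right hab hκ) hq)
    (by positivity)

theorem hasDerivAt_levelTime_H (hκ : 0 < κ) (hα : 0 < α) (hε : 0 ≤ ε) {t : ℝ} (ht : t < 0) :
    HasDerivAt (fun t => levelTime κ α (H κ α ε t))
      (κ⁻¹ * |t| ^ α * (H κ α ε t / κ) ^ (-α / (1 + α) - 1)) t := by
  have hH : HasDerivAt (fun t => H κ α ε t / κ) (-((1 + α) * |t| ^ α)) t := by
    have := (((hasDerivAt_abs_neg ht).rpow_const (p := 1 + α) (Or.inl (abs_pos.2 ht.ne).ne')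
      ).const_mul κ).add_const ε |>.div_const κ
    refine this.congr_deriv ?_
    rw [add_sub_cancel_left]
    field_simp
  have := (hH.rpow_const (p := -α / (1 + α))
    (Or.inl (div_pos (H_pos hκ hε ht.ne) hκ).ne')).const_mul (α * κ)⁻¹
  refine this.congr_deriv ?_
  field_simp

theorem levelTime_deriv_le (hκ : 0 < κ) (hα : 0 < α) (hε : 0 ≤ ε) {t : ℝ} (ht : t ≠ 0) :
    κ⁻¹ * |t| ^ α * (H κ α ε t / κ) ^ (-α / (1 + α) - 1) ≤ 1 / H κ α ε t := by
  set h := H κ α ε t / κ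
  have hh : 0 < h := div_pos (H_pos hκ hε ht) hκ
  have hpow : |t| ^ α ≤ h ^ (α / (1 + α)) := calc
    |t| ^ α = (|t| ^ (1 + α)) ^ (α / (1 + α)) := by
      rw [← Real.rpow_mul (abs_nonneg t)]; congr 1; field_simp
    _ ≤ h ^ (α / (1 + α)) := by
      refine Real.rpow_le_rpow (by positivity) ?_ (by positivity)
      rw [le_div_iff₀ hκ, H]
      linarith
  have hH : 1 / H κ α ε t = κ⁻¹ * h ^ (α / (1 + α)) * h ^ (-α / (1 + α) - 1) := by
    rw [mul_assoc, ← Real.rpow_add hh, neg_div, add_sub_assoc', add_neg_cancel, zero_sub,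
      Real.rpow_neg_one]
    simp only [h]
    field_simp
  rw [hH]
  gcongr

theorem levelTime_deriv_eq (hκ : 0 < κ) (hα : 0 < α) {t : ℝ} (ht : t ≠ 0) :
    κ⁻¹ * |t| ^ α * (H κ α 0 t / κ) ^ (-α / (1 + α) - 1) = 1 / H κ α 0 t := by
  have habs : 0 < |t| := abs_pos.2 ht
  have hh : H κ α 0 t / κ = |t| ^ (1 + α) := by rw [H, add_zero]; field_simp
  rw [hh, ← Real.rpow_mul habs.le, mul_assoc, ← Real.rpow_add habs, H, add_zero,
    show α + (1 + α) * (-α / (1 + α) - 1) = -(1 + α) by field_simp; ring, Real.rpow_neg habs.le]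
  field_simp

theorem levelTime_H_zero (hκ : 0 < κ) (hα : 0 ≤ α) (s : ℝ) :
    levelTime κ α (H κ α 0 s) = (α * κ)⁻¹ * |s| ^ (-α) := by
  rw [levelTime, H, add_zero, mul_div_cancel_left₀ _ hκ.ne', ← Real.rpow_mul (abs_nonneg s),
    mul_div_cancel₀ _ (by linarith)]

theorem rho_zero_eq (hκ : 0 < κ) (hα : 0 < α) {ξ : ℝ} (hδ : δ < 0) (hξ : ξ < 0) :
    rho κ α 0 δ ξ = levelTime κ α (H κ α 0 ξ) - levelTime κ α (H κ α 0 δ) := by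
  unfold rho
  refine integral_eq_sub_of_hasDerivAt (f := fun t => levelTime κ α (H κ α 0 t)) (fun t ht => ?_)
    (intervalIntegrable_inv_H hκ hα.le le_rfl hδ hξ)
  have ht : t < 0 := ht.2.trans_lt (max_lt hδ hξ)
  exact (hasDerivAt_levelTime_H hκ hα le_rfl ht).congr_deriv (levelTime_deriv_eq hκ hα ht.ne)

theorem levelTime_sub_le_rho (hκ : 0 < κ) (hα : 0 < α) (hε : 0 ≤ ε) {ξ : ℝ} (hδξ : δ ≤ ξ)
    (hξ : ξ < 0) :
    levelTime κ α (H κ α ε ξ) - levelTime κ α (H κ α 0 δ) ≤ rho κ α ε δ ξ := by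
  have hneg : ∀ t ∈ Icc δ ξ, t < 0 := fun t ht => ht.2.trans_lt hξ
  have hδ : δ < 0 := hneg δ (left_mem_Icc.2 hδξ)
  have hderiv := fun t ht => hasDerivAt_levelTime_H hκ hα hε (hneg t ht)
  have hFTC := sub_le_integral_of_hasDeriv_right_of_le hδξ
    (fun t ht => (hderiv t ht).continuousAt.continuousWithinAt)
    (fun t ht => (hderiv t (Ioo_subset_Icc_self ht)).hasDerivWithinAt)
    ((intervalIntegrable_iff_integrableOn_Icc_of_le hδξ).1
      (intervalIntegrable_inv_H hκ hα.le hε hδ hξ))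
    (fun t ht => levelTime_deriv_le hκ hα hε (hneg t (Ioo_subset_Icc_self ht)).ne)
  have hstart : levelTime κ α (H κ α ε δ) ≤ levelTime κ α (H κ α 0 δ) :=
    (levelTime_strictAntiOn hκ hα).antitoneOn (H_pos hκ le_rfl hδ.ne) (H_pos hκ hε hδ.ne)
      (by simp only [H]; linarith)
  unfold rho
  linarith

theorem H_zero_le_of_rho_eq (hκ : 0 < κ) (hα : 0 < α) (hε : 0 ≤ ε) {η ξ : ℝ} (hδξ : δ ≤ ξ)
    (hξ : ξ < 0) (hη : η < 0) (h : rho κ α 0 δ η = rho κ α ε δ ξ) :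
    H κ α 0 η ≤ H κ α ε ξ := by
  have hbound := levelTime_sub_le_rho hκ hα hε hδξ hξ
  rw [← h, rho_zero_eq hκ hα (hδξ.trans_lt hξ) hη] at hbound
  exact ((levelTime_strictAntiOn hκ hα).le_iff_ge (H_pos hκ hε hξ.ne)
    (H_pos hκ le_rfl hη.ne)).1 (by linarith)

theorem H_zero_le_H_add (hκ : 0 ≤ κ) (hα : 0 ≤ α) {a t c : ℝ} (hat : a ≤ t) (hc : 0 ≤ c)
    (htc : t + c ≤ 0) (ha : H κ α 0 a ≤ H κ α ε (a + c)) : H κ α 0 t ≤ H κ α ε (t + c) := by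
  have hconv := (convexOn_rpow (p := 1 + α) (by linarith)).map_add_sub_map_le
    (x := -(t + c)) (y := -(a + c)) (mem_Ici.2 (by linarith)) (mem_Ici.2 (by linarith))
    (by linarith) hc
  rw [show -(t + c) + c = -t by ring, show -(a + c) + c = -a by ring] at hconv
  simp only [H, add_zero, abs_of_nonpos (show t ≤ 0 by linarith),
    abs_of_nonpos (show a ≤ 0 by linarith), abs_of_nonpos htc,
    abs_of_nonpos (show a + c ≤ 0 by linarith)] at ha ⊢
  nlinarith [mul_le_mul_of_nonneg_left hconv hκ]

theorem rho_strictMono (hκ : 0 ≤ κ) (hα : 0 ≤ α) (hε : 0 < ε) :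
    StrictMono (rho κ α ε δ) := by
  intro b d hbd
  have hf := continuous_inv_H hκ hα hε
  have hpos := intervalIntegral_pos_of_pos_on (hf.intervalIntegrable b d)
    (fun t _ => one_div_pos.2 (H_pos_of_pos hκ hε t)) hbd
  rw [← integral_interval_sub_left (hf.intervalIntegrable δ d) (hf.intervalIntegrable δ b)] at hpos
  unfold rho
  linarith

def IsMu (κ α ε δ x s : ℝ) : Prop := s ∈ Ico δ 0 ∧ rho κ α ε δ s = x

theorem isMu_zero (hκ : 0 < κ) (hα : 0 < α) (hδ : δ < 0) {x : ℝ} (hx : 0 ≤ x) :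
    IsMu κ α 0 δ x (-((α * κ) ^ (-(1 / α)) * (x + (α * κ)⁻¹ * |δ| ^ (-α)) ^ (-(1 / α)))) := by
  set X := x + (α * κ)⁻¹ * |δ| ^ (-α)
  set η := -((α * κ) ^ (-(1 / α)) * X ^ (-(1 / α)))
  have hδ' : 0 < |δ| := abs_pos.2 hδ.ne
  have hακ : 0 < α * κ := mul_pos hα hκ
  have hX : 0 < X := by positivity
  have habs : |η| = (α * κ * X) ^ (-(1 / α)) := by
    rw [abs_neg, abs_of_pos (by positivity), Real.mul_rpow hακ.le hX.le]
  have hη : η < 0 := neg_lt_zero.2 (by positivity)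
  have hηα : |η| ^ (-α) = α * κ * X := by
    rw [habs, ← Real.rpow_mul (by positivity), show -(1 / α) * -α = 1 by field_simp,
      Real.rpow_one]
  have hδη : δ ≤ η := by
    have : |δ| ^ (-α) ≤ |η| ^ (-α) := by
      rw [hηα]
      simp only [X]
      field_simp
      nlinarith [mul_nonneg hακ.le hx]
    rw [Real.rpow_le_rpow_iff_of_neg hδ' (abs_pos.2 hη.ne) (by linarith), abs_of_neg hη,
      abs_of_neg hδ] at this
    linarith
  refine ⟨⟨hδη, hη⟩, ?_⟩
  rw [rho_zero_eq hκ hα hδ hη, levelTime_H_zero hκ hα.le, levelTime_H_zero hκ hα.le, hηα]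
  simp only [X]
  field_simp
  ring

theorem IsMu.zero_le (hκ : 0 < κ) (hα : 0 ≤ α) (hε : 0 ≤ ε) {x a b : ℝ}
    (ha : IsMu κ α 0 δ x a) (hb : IsMu κ α ε δ x b) : a ≤ b := by
  have hδ : δ < 0 := ha.1.1.trans_lt ha.1.2
  refine le_of_integral_eq_of_le hb.1.1 (intervalIntegrable_inv_H hκ hα hε hδ hb.1.2)
    (intervalIntegrable_inv_H hκ hα le_rfl hδ ha.1.2) (fun t ht => ?_) (fun t ht => ?_)
    (ha.2.trans hb.2.symm)
  · have ht : t < 0 := ht.2.trans_lt hb.1.2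
    exact one_div_le_one_div_of_le (H_pos hκ le_rfl ht.ne) (by simp only [H]; linarith)
  · exact one_div_pos.2 (H_pos hκ le_rfl (ht.2.trans ha.1.2).ne)

theorem IsMu.sub_le_sub (hκ : 0 < κ) (hα : 0 < α) (hε : 0 < ε) {x y a b c d : ℝ} (hxy : x ≤ y)
    (ha : IsMu κ α 0 δ x a) (hb : IsMu κ α ε δ x b) (hc : IsMu κ α 0 δ y c)
    (hd : IsMu κ α ε δ y d) : b - a ≤ d - c := by
  have hδ : δ < 0 := ha.1.1.trans_lt ha.1.2
  have hab : a ≤ b := ha.zero_le hκ hα.le hε.le hb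
  have hbd : b ≤ d := (rho_strictMono hκ.le hα.le hε).le_iff_le.1 (by rw [hb.2, hd.2]; exact hxy)
  have hf := continuous_inv_H hκ.le hα.le hε
  have hg := fun {u v : ℝ} (hu : u < 0) (hv : v < 0) =>
    intervalIntegrable_inv_H hκ hα.le le_rfl hu hv
  have hH : H κ α 0 a ≤ H κ α ε b :=
    H_zero_le_of_rho_eq hκ hα hε.le hb.1.1 hb.1.2 ha.1.2 (ha.2.trans hb.2.symm)
  -- both sides equal `y - x`; the right one is `∫ b..d` shifted back by `b - a`
  have hshift : ∫ t in a..c, 1 / H κ α 0 t = ∫ t in a..d - (b - a), 1 / H κ α ε (t + (b - a)) := by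
    rw [integral_comp_add_right (fun s => 1 / H κ α ε s), sub_add_cancel, add_sub_cancel,
      ← integral_interval_sub_left (hf.intervalIntegrable δ d) (hf.intervalIntegrable δ b),
      ← integral_interval_sub_left (hg hδ hc.1.2) (hg hδ ha.1.2)]
    change rho κ α 0 δ c - rho κ α 0 δ a = rho κ α ε δ d - rho κ α ε δ b
    rw [ha.2, hb.2, hc.2, hd.2]
  have hslope : ∀ t ∈ Icc a (d - (b - a)), 1 / H κ α ε (t + (b - a)) ≤ 1 / H κ α 0 t :=
    fun t ht => one_div_le_one_div_of_le (H_pos hκ le_rfl (by linarith [ht.2, hd.1.2] : t < 0).ne)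
      (H_zero_le_H_add hκ.le hα.le ht.1 (sub_nonneg.2 hab) (by linarith [ht.2, hd.1.2])
        (by rwa [add_sub_cancel]))
  have hcd := le_of_integral_eq_of_le (by linarith)
    ((hf.comp (continuous_add_const (b - a))).intervalIntegrable _ _) (hg ha.1.2 hc.1.2) hslope
    (fun t ht => one_div_pos.2 (H_pos hκ le_rfl (ht.2.trans hc.1.2).ne)) hshift
  linarith

end PowerFlux

open PowerFlux

theorem stmt_4_general (κ α δ : ℝ) (hκ : 0 < κ) (hα : 0 < α) (hδ : δ < 0)
    (xhat : ℝ) (hxhat : xhat = (α * κ)⁻¹ * |δ| ^ (-α))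
    (ℓ : ℝ → ℝ)
    (μ : ℝ → ℝ → ℝ)
    (hμ0 : ∀ x₁, μ 0 x₁ = -((α * κ) ^ (-(1 / α)) * (x₁ + xhat) ^ (-(1 / α))))
    (hμ : ∀ ε, 0 < ε → ∀ x₁ ∈ Ico (0 : ℝ) (ℓ ε),
      μ ε x₁ ∈ Ico δ 0 ∧ (∫ s in δ..(μ ε x₁), 1 / (κ * |s| ^ (1 + α) + ε)) = x₁) :
    ∀ ε, 0 < ε →
      (∀ x₁ ∈ Ico (0 : ℝ) (ℓ ε),
        μ 0 x₁ ≤ μ ε x₁ ∧ μ ε x₁ < 0 ∧ 0 ≤ μ ε x₁ - μ 0 x₁) ∧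
      MonotoneOn (fun x₁ => μ ε x₁ - μ 0 x₁) (Ico (0 : ℝ) (ℓ ε)) := by
  intro ε hε
  have hμ0' : ∀ x₁ ∈ Ico 0 (ℓ ε), IsMu κ α 0 δ x₁ (μ 0 x₁) := fun x₁ hx₁ => by
    rw [hμ0, hxhat]
    exact isMu_zero hκ hα hδ hx₁.1
  have hμ' : ∀ x₁ ∈ Ico 0 (ℓ ε), IsMu κ α ε δ x₁ (μ ε x₁) := hμ ε hε
  refine ⟨fun x₁ hx₁ => ?_, fun x₁ hx₁ y₁ hy₁ hxy => ?_⟩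
  · have hle := (hμ0' x₁ hx₁).zero_le hκ hα.le hε.le (hμ' x₁ hx₁)
    exact ⟨hle, (hμ' x₁ hx₁).1.2, sub_nonneg.2 hle⟩
  · exact (hμ0' x₁ hx₁).sub_le_sub hκ hα hε hxy (hμ' x₁ hx₁) (hμ0' y₁ hy₁) (hμ' y₁ hy₁)

/-- for every ε > 0 and x₁ ∈ [0, ℓ_ε), μ₀(x₁) ≤ μ_ε(x₁) < 0, and the
difference x₁ ↦ μ_ε(x₁) − μ₀(x₁) is nonnegative and nondecreasing on [0, ℓ_ε). -/
theorem stmt_4 (κ α δ : ℝ) (hκ : 0 < κ) (hα : 0 < α) (hδ : δ < 0)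
    (xhat : ℝ) (hxhat : xhat = (α * κ)⁻¹ * |δ| ^ (-α))
    (ℓ : ℝ → ℝ)
    (hℓ : ∀ ε, 0 < ε → ℓ ε = ∫ s in δ..(0 : ℝ), 1 / (κ * |s| ^ (1 + α) + ε))
    (μ : ℝ → ℝ → ℝ)
    (hμ0 : ∀ x₁, μ 0 x₁ = -((α * κ) ^ (-(1 / α)) * (x₁ + xhat) ^ (-(1 / α))))
    (hμ : ∀ ε, 0 < ε → ∀ x₁ ∈ Ico (0 : ℝ) (ℓ ε),
      μ ε x₁ ∈ Ico δ 0 ∧ (∫ s in δ..(μ ε x₁), 1 / (κ * |s| ^ (1 + α) + ε)) = x₁) :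
    ∀ ε, 0 < ε →
      (∀ x₁ ∈ Ico (0 : ℝ) (ℓ ε),
        μ 0 x₁ ≤ μ ε x₁ ∧ μ ε x₁ < 0 ∧ 0 ≤ μ ε x₁ - μ 0 x₁) ∧
      MonotoneOn (fun x₁ => μ ε x₁ - μ 0 x₁) (Ico (0 : ℝ) (ℓ ε)) :=
  stmt_4_general κ α δ hκ hα hδ xhat hxhat ℓ μ hμ0 hμ
end

section
/- Let κ > 0, α > 2 and a < 0. Then lim_{ε→0⁺} ε^{1 − 3/(1+α)} ∫_a^0 ξ² / (κ(−ξ)^{1+α} + ε) dξ = (1/3) κ^{−3/(1+α)} · (3π/(1+α)) / sin(3π/(1+α)). Equivalently, ∫_a^0 ξ²/(κ(−ξ)^{1+α} + ε) dξ ∼ (1/3) ε^{3/(1+α) − 1} κ^{−3/(1+α)} (3π/(1+α))/sin(3π/(1+α)) as ε → 0⁺. -/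
open Set MeasureTheory Real Filter Topology

/-!
Substituting ξ = -(ε/κ)^{1/(1+α)} t turns ε^{1-3/(1+α)} ∫_a^0 ξ²/(κ(-ξ)^{1+α} + ε) dξ into
κ^{-3/(1+α)} ∫_0^{T(ε)} t²/(1 + t^{1+α}) dt with T(ε) → ∞. The substitutions y = t^{1+α} and
y = u/(1-u) reduce the limiting integral to the beta integral B(s, 1-s) = Γ(s) Γ(1-s) = π / sin(πs)
with s = 3/(1+α).
-/

theorem Complex.betaIntegral_ofReal (a b : ℝ) :
    Complex.betaIntegral a b = ((∫ u in (0:ℝ)..1, u ^ (a - 1) * (1 - u) ^ (b - 1) : ℝ) : ℂ) := by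
  rw [Complex.betaIntegral, ← intervalIntegral.integral_ofReal]
  refine intervalIntegral.integral_congr fun u hu => ?_
  rw [uIcc_of_le zero_le_one] at hu
  have h1u : (0:ℝ) ≤ 1 - u := by linarith [hu.2]
  push_cast [Complex.ofReal_cpow hu.1, Complex.ofReal_cpow h1u]
  rfl

theorem integral_rpow_mul_one_sub_rpow_neg {s : ℝ} (h0 : 0 < s) (h1 : s < 1) :
    ∫ u in (0:ℝ)..1, u ^ (s - 1) * (1 - u) ^ (-s) = π / sin (π * s) := by
  have hB := Complex.Gamma_mul_Gamma_eq_betaIntegral (s := s) (t := ((1 - s : ℝ) : ℂ))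
    (by simpa using h0) (by simpa using h1)
  rw [Complex.ofReal_sub, Complex.ofReal_one, add_sub_cancel, Complex.Gamma_one, one_mul,
    Complex.Gamma_mul_Gamma_one_sub, ← Complex.ofReal_one, ← Complex.ofReal_sub,
    Complex.betaIntegral_ofReal, sub_sub_cancel_left] at hB
  exact_mod_cast hB.symm

theorem image_div_one_sub_Ioo : (fun u : ℝ => u / (1 - u)) '' Ioo 0 1 = Ioi 0 := by
  ext y
  constructor
  · rintro ⟨u, ⟨hu0, hu1⟩, rfl⟩
    exact div_pos hu0 (sub_pos.2 hu1)
  · intro (hy : 0 < y)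
    refine ⟨y / (1 + y), ⟨by positivity, (div_lt_one (by positivity)).2 (by linarith)⟩, ?_⟩
    field_simp
    ring

theorem integral_Ioi_rpow_div_one_add {s : ℝ} (h0 : 0 < s) (h1 : s < 1) :
    ∫ y in Ioi (0:ℝ), y ^ (s - 1) / (1 + y) = π / sin (π * s) := by
  have hderiv : ∀ u ∈ Ioo (0:ℝ) 1,
      HasDerivWithinAt (fun u => u / (1 - u)) ((1 - u) ^ 2)⁻¹ (Ioo 0 1) u := by
    intro u ⟨_, hu1⟩
    refine ((hasDerivAt_id' u).div ((hasDerivAt_id' u).const_sub 1)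
      (sub_pos.2 hu1).ne').hasDerivWithinAt.congr_deriv ?_
    ring
  have hinj : InjOn (fun u : ℝ => u / (1 - u)) (Ioo 0 1) := by
    rintro x ⟨-, hx1⟩ y ⟨-, hy1⟩ hxy
    rw [div_eq_div_iff (sub_pos.2 hx1).ne' (sub_pos.2 hy1).ne'] at hxy
    linarith
  rw [← image_div_one_sub_Ioo, integral_image_eq_integral_abs_deriv_smul measurableSet_Ioo
    hderiv hinj, ← integral_rpow_mul_one_sub_rpow_neg h0 h1,
    intervalIntegral.integral_of_le zero_le_one, integral_Ioc_eq_integral_Ioo]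
  refine setIntegral_congr_fun measurableSet_Ioo fun u ⟨hu0, hu1⟩ => ?_
  have hv : 0 < 1 - u := sub_pos.2 hu1
  rw [smul_eq_mul, abs_of_pos (by positivity), div_rpow hu0.le hv.le, rpow_sub_one hv.ne',
    rpow_neg hv.le]
  field_simp
  ring

theorem integral_Ioi_pow_div_one_add_rpow {n : ℕ} {p : ℝ} (hp : (n + 1 : ℝ) < p) :
    ∫ t in Ioi (0:ℝ), t ^ n / (1 + t ^ p) = π / (p * sin (π * ((n + 1) / p))) := by
  have hp0 : 0 < p := by linarith
  set s := (n + 1 : ℝ) / p with hs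
  have hs0 : 0 < s := by positivity
  have hs1 : s < 1 := (div_lt_one hp0).2 hp
  have hps : p * s = n + 1 := by rw [hs]; field_simp
  calc ∫ t in Ioi (0:ℝ), t ^ n / (1 + t ^ p)
      = ∫ t in Ioi (0:ℝ), (p * t ^ (p - 1)) • (p⁻¹ * ((t ^ p) ^ (s - 1) / (1 + t ^ p))) := by
        refine setIntegral_congr_fun measurableSet_Ioi fun t (ht : 0 < t) => ?_
        have hexp : t ^ (p - 1) * (t ^ p) ^ (s - 1) = t ^ n := by
          rw [← rpow_mul ht.le, ← rpow_add ht, ← rpow_natCast]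
          congr 1
          linear_combination hps
        rw [smul_eq_mul, ← hexp]
        field_simp
    _ = ∫ y in Ioi (0:ℝ), p⁻¹ * (y ^ (s - 1) / (1 + y)) := 
        integral_comp_rpow_Ioi_of_pos (g := fun y => p⁻¹ * (y ^ (s - 1) / (1 + y))) hp0
    _ = π / (p * sin (π * s)) := by
        rw [integral_const_mul, integral_Ioi_rpow_div_one_add hs0 hs1]
        ring

theorem integrableOn_Ioi_pow_div_one_add_rpow {n : ℕ} {p : ℝ} (hp : (n + 1 : ℝ) < p) :
    IntegrableOn (fun t : ℝ => t ^ n / (1 + t ^ p)) (Ioi 0) := by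
  have hp0 : 0 < p := by linarith
  have hcont : ContinuousOn (fun t : ℝ => t ^ n / (1 + t ^ p)) (Ici 0) :=
    (continuousOn_pow n).div (continuous_const.add (continuous_rpow_const hp0.le)).continuousOn
      fun t (ht : 0 ≤ t) => by positivity
  rw [← Ioc_union_Ioi_eq_Ioi zero_le_one]
  refine IntegrableOn.union ((hcont.mono Icc_subset_Ici_self).integrableOn_Icc.mono_set
    Ioc_subset_Icc_self) ?_
  have hdom : IntegrableOn (fun t : ℝ => t ^ (n - p)) (Ioi 1) :=
    integrableOn_Ioi_rpow_of_lt (by linarith) zero_lt_one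
  refine hdom.mono' ((hcont.mono fun t (ht : 1 < t) => by simp only [mem_Ici]; linarith)
    |>.aestronglyMeasurable measurableSet_Ioi) ?_
  filter_upwards [ae_restrict_mem measurableSet_Ioi] with t (ht : 1 < t)
  have ht0 : 0 < t := by linarith
  rw [norm_of_nonneg (by positivity), rpow_sub ht0, rpow_natCast]
  exact div_le_div_of_nonneg_left (by positivity) (by positivity) (by linarith)

theorem integral_pow_div_mul_rpow_add {n : ℕ} {p κ ε b : ℝ} (hp : 0 < p) (hκ : 0 < κ)
    (hε : 0 < ε) (hb : 0 ≤ b) :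
    ∫ x in (0:ℝ)..b, x ^ n / (κ * x ^ p + ε)
      = (ε / κ) ^ ((n + 1) / p) / ε * ∫ t in (0:ℝ)..b / (ε / κ) ^ (1 / p), t ^ n / (1 + t ^ p) := by
  set l := (ε / κ) ^ (1 / p)
  have hl : 0 < l := by positivity
  have hlp : l ^ p = ε / κ := by
    rw [← rpow_mul (by positivity), one_div_mul_cancel hp.ne', rpow_one]
  have hln : l ^ (n + 1) = (ε / κ) ^ ((n + 1) / p) := by
    rw [← rpow_mul_natCast (by positivity)]
    push_cast
    ring_nf
  calc ∫ x in (0:ℝ)..b, x ^ n / (κ * x ^ p + ε)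
      = l • ∫ t in (0:ℝ)..b / l, (l * t) ^ n / (κ * (l * t) ^ p + ε) := by
        rw [intervalIntegral.smul_integral_comp_mul_left (fun x => x ^ n / (κ * x ^ p + ε)),
          mul_zero, mul_div_cancel₀ _ hl.ne']
    _ = l • ∫ t in (0:ℝ)..b / l, l ^ n / ε * (t ^ n / (1 + t ^ p)) := by
        refine congrArg _ (intervalIntegral.integral_congr fun t ht => ?_)
        rw [uIcc_of_le (by positivity)] at ht
        rw [mul_rpow hl.le ht.1, hlp, mul_pow]
        field_simp
        ring
    _ = (ε / κ) ^ ((n + 1) / p) / ε * ∫ t in (0:ℝ)..b / l, t ^ n / (1 + t ^ p) := by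
        rw [intervalIntegral.integral_const_mul, smul_eq_mul, ← hln]
        ring

theorem tendsto_rpow_mul_integral_pow_div_mul_rpow_add {n : ℕ} {p κ b : ℝ} (hp : (n + 1 : ℝ) < p)
    (hκ : 0 < κ) (hb : 0 < b) :
    Tendsto (fun ε => ε ^ (1 - (n + 1) / p) * ∫ x in (0:ℝ)..b, x ^ n / (κ * x ^ p + ε))
      (𝓝[>] 0) (𝓝 (κ ^ (-((n + 1) / p)) * (π / (p * sin (π * ((n + 1) / p)))))) := by
  have hp0 : 0 < p := by linarith
  have hupper : Tendsto (fun ε : ℝ => b / (ε / κ) ^ (1 / p)) (𝓝[>] 0) atTop := by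
    have hdiv : Tendsto (fun ε : ℝ => ε / κ) (𝓝[>] 0) (𝓝[>] 0) := by
      refine tendsto_nhdsWithin_of_tendsto_nhds_of_eventually_within _
        (((continuous_id.div_const κ).tendsto' 0 0 (zero_div κ)).mono_left nhdsWithin_le_nhds) ?_
      filter_upwards [self_mem_nhdsWithin] with ε (hε : 0 < ε) using div_pos hε hκ
    refine (((tendsto_rpow_neg_nhdsGT_zero (neg_lt_zero.2 (one_div_pos.2 hp0))).comp
      hdiv).const_mul_atTop hb).congr' ?_
    filter_upwards [self_mem_nhdsWithin] with ε (hε : 0 < ε)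
    rw [Function.comp_apply, rpow_neg (div_pos hε hκ).le, div_eq_mul_inv b]
  rw [← integral_Ioi_pow_div_one_add_rpow hp]
  refine ((intervalIntegral_tendsto_integral_Ioi 0 (integrableOn_Ioi_pow_div_one_add_rpow hp)
    hupper).const_mul _).congr' ?_
  filter_upwards [self_mem_nhdsWithin] with ε (hε : 0 < ε)
  rw [integral_pow_div_mul_rpow_add hp0 hκ hε hb.le, div_rpow hε.le hκ.le ((n + 1) / p),
    rpow_neg hκ.le, rpow_sub hε, rpow_one]
  field_simp

/-- for κ > 0, α > 2 and a < 0,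
ε^{1−3/(1+α)} ∫_a^0 ξ²/(κ(−ξ)^{1+α}+ε) dξ → (1/3) κ^{−3/(1+α)} (3π/(1+α))/sin(3π/(1+α))
as ε → 0⁺. -/
theorem stmt_16 (κ α a : ℝ) (hκ : 0 < κ) (hα : 2 < α) (ha : a < 0) :
    Tendsto
      (fun ε : ℝ => ε ^ (1 - 3 / (1 + α)) *
        ∫ ξ in a..(0 : ℝ), ξ ^ 2 / (κ * (-ξ) ^ (1 + α) + ε))
      (nhdsWithin 0 (Ioi 0))
      (nhds ((1 / 3) * κ ^ (-(3 / (1 + α))) *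
        ((3 * π / (1 + α)) / Real.sin (3 * π / (1 + α))))) := by
  have hp : ((2 : ℕ) + 1 : ℝ) < 1 + α := by norm_num; linarith
  have hlim := tendsto_rpow_mul_integral_pow_div_mul_rpow_add hp hκ (neg_pos.2 ha)
  rw [show ((2 : ℕ) + 1 : ℝ) = 3 by norm_num, mul_div_assoc' π, mul_comm π] at hlim
  have hreflect (ε : ℝ) : ∫ ξ in a..(0 : ℝ), ξ ^ 2 / (κ * (-ξ) ^ (1 + α) + ε)
      = ∫ x in (0:ℝ)..-a, x ^ 2 / (κ * x ^ (1 + α) + ε) := by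
    simpa only [neg_sq, neg_zero] using intervalIntegral.integral_comp_neg (a := a) (b := 0)
      (fun x : ℝ => x ^ (2 : ℕ) / (κ * x ^ (1 + α) + ε))
  simp_rw [hreflect]
  convert hlim using 2
  field_simp
end
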